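/- Let t ∈ ℂ with t ∉ ℝ and t ∉ iℝ (t is neither real nor purely imaginary), and suppose 2t·conj(1 − t⁴) ∈ ℝ and the quantity (3(1+t²)² − 16t²)·conj(1 − t⁴) ∈ ℝ. Then 1 − t⁴ = 0, i.e. t ∈ {1, −1, i, −i}; hence no such t exists. -/
import Mathlib


/-- If t ∈ ℂ is neither real nor purely imaginary and both 2t·conj(1−t⁴) and
(3(1+t²)²−16t²)·conj(1−t⁴) are real, then 1−t⁴ = 0, i.e. t ∈ {1,−1,i,−i}; this contradicts
t being neither real nor purely imaginary, hence no such t exists. -/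
theorem no_extra_shade_intersections (t : ℂ) (h_re : t.im ≠ 0) (h_im : t.re ≠ 0)
    (ha : (2 * t * (starRingEnd ℂ) (1 - t ^ 4)).im = 0)
    (hb : ((3 * (1 + t ^ 2) ^ 2 - 16 * t ^ 2) * (starRingEnd ℂ) (1 - t ^ 4)).im = 0) :
    False := by
  set x := t.re with hx
  set y := t.im with hy
  have e1 : 2 * y * (3*x^4 + 2*x^2*y^2 + 1 - y^4) = 0 := by
    rw [← ha]
    simp only [Complex.mul_im, Complex.mul_re, Complex.sub_im, Complex.sub_re,
      Complex.one_im, Complex.one_re, map_sub, map_pow, map_one, Complex.conj_re,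
      Complex.conj_im, Complex.re_ofNat, Complex.im_ofNat, pow_succ, pow_zero, one_mul]
    ring
  have e2 : -4 * (x*y) * (5*x^4 + 10*x^2*y^2 + 5*y^4 - 6*x^2 + 6*y^2 + 5) = 0 := by
    rw [← hb]
    simp only [Complex.mul_im, Complex.mul_re, Complex.sub_im, Complex.sub_re, Complex.add_im,
      Complex.add_re, Complex.one_im, Complex.one_re, map_sub, map_pow, map_one,
      Complex.conj_re, Complex.conj_im, Complex.re_ofNat, Complex.im_ofNat,
      pow_succ, pow_zero, one_mul]
    ring
  have h1 : 3*x^4 + 2*x^2*y^2 + 1 - y^4 = 0 := by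
    rcases mul_eq_zero.mp e1 with h | h
    · exact absurd (by linarith) h_re
    · exact h
  have h2 : 5*x^4 + 10*x^2*y^2 + 5*y^4 - 6*x^2 + 6*y^2 + 5 = 0 := by
    rcases mul_eq_zero.mp e2 with h | h
    · rcases mul_eq_zero.mp h with h' | h'
      · norm_num at h'
      · exact absurd h' (mul_ne_zero h_im h_re)
    · exact h
  nlinarith [sq_nonneg (x*y), sq_nonneg x, sq_nonneg y, sq_nonneg (x^2), sq_nonneg (y^2), sq_nonneg (x^2 - 1), sq_nonneg (2*x^2-1)]
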